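/- Let M be any countable structure in a countable relational language L and let λ be a countable limit ordinal. Then: (1) the sets {N ∈ Mod(L) : N ≤_λ M} and {N ∈ Mod(L) : N ≥_λ M} are equal and are 𝚷⁰_λ; (2) for α = λ+1, the set {N ∈ Mod(L) : N ≥_α M} is 𝚷⁰_{α+1}; and (3) for α = λ+1, the set {N ∈ Mod(L) : N ≤_α M} is 𝚷⁰_{α+1}. -/

import Mathlib

open FirstOrder Language

namespace BFPaper

noncomputable section

/-! ## Countability of formulas in a countable relational language -/

instance formulaCountable (L : FirstOrder.Language.{0,0}) [L.IsRelational]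
    [∀ n, Countable (L.Relations n)] (α : Type) [Countable α] :
    Countable (L.Formula α) := by
  have h1 : Countable (Σ n, L.BoundedFormula α n) :=
    Function.Injective.countable BoundedFormula.listEncode_sigma_injective
  exact Function.Injective.countable
    (f := fun φ : L.Formula α => (⟨0, φ⟩ : Σ n, L.BoundedFormula α n))
    (fun a b h => by simpa using h)

/-- A fixed enumeration of the quantifier-free first-order formulas in the
variables `x_0, …, x_{n-1}`. -/
noncomputable def qfEnum (L : FirstOrder.Language.{0,0}) [L.IsRelational]
    [∀ n, Countable (L.Relations n)] (n : ℕ) : ℕ → L.Formula (Fin n) := fun k =>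
  haveI : Nonempty {φ : L.Formula (Fin n) // φ.IsQF} :=
    ⟨⟨⊥, BoundedFormula.isQF_bot⟩⟩
  (Classical.choose (exists_surjective_nat {φ : L.Formula (Fin n) // φ.IsQF}) k).1

/-! ## The standard asymmetric back-and-forth relations -/

/-- `bfLeq L α M N a b` is the standard asymmetric back-and-forth relation
`(M, ā) ≤_α (N, b̄)`. -/
noncomputable def bfLeq (L : FirstOrder.Language.{0,0}) [L.IsRelational]
    [∀ n, Countable (L.Relations n)] (α : Ordinal.{0}) (M N : Type)
    [L.Structure M] [L.Structure N] {n : ℕ} (a : Fin n → M) (b : Fin n → N) : Prop :=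
  if α = 0 then
    ∀ k < n, ((qfEnum L n k).Realize a ↔ (qfEnum L n k).Realize b)
  else
    ∀ β, ∀ _ : β < α, ∀ (m : ℕ) (d : Fin m → N), ∃ c : Fin m → M,
      bfLeq L β N M (Fin.append b d) (Fin.append a c)
termination_by α
decreasing_by assumption

/-- `M ≤_α N` for whole structures (empty tuples). -/
noncomputable def structLeq (L : FirstOrder.Language.{0,0}) [L.IsRelational]
    [∀ n, Countable (L.Relations n)] (α : Ordinal.{0}) (M N : Type)
    [L.Structure M] [L.Structure N] : Prop :=
  bfLeq L α M N Fin.elim0 Fin.elim0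

/-! ## The space of countable `L`-structures -/

/-- The Polish space `Mod(L)` of `L`-structures with universe `ℕ` (for a relational
language), presented as a product of discrete spaces. -/
abbrev ModSpace (L : FirstOrder.Language.{0,0}) : Type :=
  ∀ (n : ℕ), L.Relations n → (Fin n → ℕ) → Bool

/-- The underlying set (`ℕ`) of the structure coded by a point of `Mod(L)`. -/
def ModCarrier {L : FirstOrder.Language.{0,0}} (_x : ModSpace L) : Type := ℕ

instance {L : FirstOrder.Language.{0,0}} (x : ModSpace L) : Countable (ModCarrier x) :=
  inferInstanceAs (Countable ℕ)

noncomputable instance modCarrierStructure {L : FirstOrder.Language.{0,0}} [L.IsRelational]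
    (x : ModSpace L) : L.Structure (ModCarrier x) where
  funMap := fun {_} f => isEmptyElim f
  RelMap := fun {n} R v => x n R v = true

/-! ## The boldface Borel hierarchy and Wadge reducibility -/

/-- `A` is (boldface) `Σ⁰_α`: `Σ⁰₁` sets are the open sets, and for `α > 1` a `Σ⁰_α` set
is a countable union of sets each of which is `Π⁰_β` for some `1 ≤ β < α`. -/
def SigmaB (α : Ordinal.{0}) {X : Type} [TopologicalSpace X] (A : Set X) : Prop :=
  if α ≤ 1 then IsOpen A
  else ∃ f : ℕ → Set X, A = (⋃ i, f i) ∧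
    ∀ i, ∃ β, 1 ≤ β ∧ ∃ _ : β < α, SigmaB β (f i)ᶜ
termination_by α
decreasing_by assumption

/-- `A` is (boldface) `Π⁰_α`, i.e. the complement of `A` is `Σ⁰_α`. -/
def PiB (α : Ordinal.{0}) {X : Type} [TopologicalSpace X] (A : Set X) : Prop :=
  SigmaB α Aᶜ

/-- `A` is `Π⁰_α`-hard: every `Π⁰_α` subset of a zero-dimensional Polish space
continuously (Wadge) reduces to `A`. -/
def PiHard (α : Ordinal.{0}) {X : Type} [TopologicalSpace X] (A : Set X) : Prop :=
  ∀ (Y : Type) [TopologicalSpace Y] [PolishSpace Y] [TotallyDisconnectedSpace Y]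
    (B : Set Y), PiB α B → ∃ g : Y → X, Continuous g ∧ ∀ y, y ∈ B ↔ g y ∈ A

/-- `A` is `Π⁰_α`-complete. -/
def PiComplete (α : Ordinal.{0}) {X : Type} [TopologicalSpace X] (A : Set X) : Prop :=
  PiB α A ∧ PiHard α A

/-! ## Infinitary formulas of `L_{ω₁ω}` -/

/-- Formulas of `L_{ω₁ω}` (with countable conjunctions and disjunctions), with free
variables indexed by `ℕ`. -/
inductive LForm (L : FirstOrder.Language.{0,0}) : Type
  | rel (n : ℕ) (R : L.Relations n) (ts : Fin n → ℕ) : LForm L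
  | equ (i j : ℕ) : LForm L
  | tru : LForm L
  | fls : LForm L
  | not (φ : LForm L) : LForm L
  | conj (f : ℕ → LForm L) : LForm L
  | disj (f : ℕ → LForm L) : LForm L
  | all (k : ℕ) (φ : LForm L) : LForm L
  | ex (k : ℕ) (φ : LForm L) : LForm L

/-- Satisfaction of an `L_{ω₁ω}` formula in a structure `M` under a variable
assignment `v : ℕ → M`. -/
def Sat {L : FirstOrder.Language.{0,0}} (M : Type) [L.Structure M] : LForm L → (ℕ → M) → Prop
  | .rel _ R ts, v => Structure.RelMap R (fun i => v (ts i))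
  | .equ i j, v => v i = v j
  | .tru, _ => True
  | .fls, _ => False
  | .not φ, v => ¬ Sat M φ v
  | .conj f, v => ∀ i, Sat M (f i) v
  | .disj f, v => ∃ i, Sat M (f i) v
  | .all k φ, v => ∀ m : M, Sat M φ (Function.update v k m)
  | .ex k φ, v => ∃ m : M, Sat M φ (Function.update v k m)

/-- The free variables of an `L_{ω₁ω}` formula. -/
def fv {L : FirstOrder.Language.{0,0}} : LForm L → Set ℕ
  | .rel _ _ ts => Set.range ts
  | .equ i j => {i, j}
  | .tru => ∅
  | .fls => ∅
  | .not φ => fv φ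
  | .conj f => ⋃ i, fv (f i)
  | .disj f => ⋃ i, fv (f i)
  | .all k φ => fv φ \ {k}
  | .ex k φ => fv φ \ {k}

/-- Finitary quantifier-free `L_{ω₁ω}` formulas. -/
inductive IsQFinf {L : FirstOrder.Language.{0,0}} : LForm L → Prop
  | rel (n R ts) : IsQFinf (.rel n R ts)
  | equ (i j) : IsQFinf (.equ i j)
  | tru : IsQFinf .tru
  | fls : IsQFinf .fls
  | not {φ} : IsQFinf φ → IsQFinf (.not φ)
  | conj {f} : (Set.range f).Finite → (∀ i, IsQFinf (f i)) → IsQFinf (.conj f)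
  | disj {f} : (Set.range f).Finite → (∀ i, IsQFinf (f i)) → IsQFinf (.disj f)

/-- `ExBlockOf φ ψ` : `φ` is `∃ x̄ ψ` for a (possibly empty) finite block of
existential quantifiers. -/
inductive ExBlockOf {L : FirstOrder.Language.{0,0}} : LForm L → LForm L → Prop
  | refl (φ) : ExBlockOf φ φ
  | ex {φ ψ} (k) : ExBlockOf φ ψ → ExBlockOf (.ex k φ) ψ

/-- `AllBlockOf φ ψ` : `φ` is `∀ x̄ ψ` for a (possibly empty) finite block of
universal quantifiers. -/
inductive AllBlockOf {L : FirstOrder.Language.{0,0}} : LForm L → LForm L → Prop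
  | refl (φ) : AllBlockOf φ φ
  | all {φ ψ} (k) : AllBlockOf φ ψ → AllBlockOf (.all k φ) ψ

/-- `IsSP α true φ` says `φ` is `Σ_α`; `IsSP α false φ` says `φ` is `Π_α`.
`Σ₀ = Π₀` are the finitary quantifier-free formulas; for `α ≥ 1`, a `Σ_α` formula is a
countable disjunction of formulas `∃x̄ᵢ ψᵢ` with each `ψᵢ` in `Π_{βᵢ}` for some `βᵢ < α`,
and dually for `Π_α`. -/
def IsSP {L : FirstOrder.Language.{0,0}} (α : Ordinal.{0}) (isSigma : Bool) (φ : LForm L) : Prop :=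
  if α = 0 then IsQFinf φ
  else if isSigma then
    ∃ f : ℕ → LForm L, φ = .disj f ∧
      ∀ i, ∃ ψ β, ∃ _ : β < α, ExBlockOf (f i) ψ ∧ IsSP β false ψ
  else
    ∃ f : ℕ → LForm L, φ = .conj f ∧
      ∀ i, ∃ ψ β, ∃ _ : β < α, AllBlockOf (f i) ψ ∧ IsSP β true ψ
termination_by α
decreasing_by all_goals assumption

/-- `φ` is a `Σ_α` formula of `L_{ω₁ω}`. -/
def IsSigmaF {L : FirstOrder.Language.{0,0}} (α : Ordinal.{0}) (φ : LForm L) : Prop := IsSP α true φ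

/-- `φ` is a `Π_α` formula of `L_{ω₁ω}`. -/
def IsPiF {L : FirstOrder.Language.{0,0}} (α : Ordinal.{0}) (φ : LForm L) : Prop := IsSP α false φ

/-! ## The back-and-forth classes `𝔈_α`, `𝔄_α`, `𝔈̄_α`, `𝔄̄_α` -/

/-- Closure of a class of formulas under existential quantification and countable
disjunction. -/
inductive CloExDisj {L : FirstOrder.Language.{0,0}} (base : LForm L → Prop) : LForm L → Prop
  | base {φ} : base φ → CloExDisj base φ
  | ex {φ} (k) : CloExDisj base φ → CloExDisj base (.ex k φ)
  | disj {f} : (∀ i, CloExDisj base (f i)) → CloExDisj base (.disj f)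

/-- Closure of a class of formulas under universal quantification and countable
conjunction. -/
inductive CloAllConj {L : FirstOrder.Language.{0,0}} (base : LForm L → Prop) : LForm L → Prop
  | base {φ} : base φ → CloAllConj base φ
  | all {φ} (k) : CloAllConj base φ → CloAllConj base (.all k φ)
  | conj {f} : (∀ i, CloAllConj base (f i)) → CloAllConj base (.conj f)

/-- Closure of a class of formulas under countable conjunctions and disjunctions. -/
inductive CloConjDisj {L : FirstOrder.Language.{0,0}} (base : LForm L → Prop) : LForm L → Prop
  | base {φ} : base φ → CloConjDisj base φ
  | conj {f} : (∀ i, CloConjDisj base (f i)) → CloConjDisj base (.conj f)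
  | disj {f} : (∀ i, CloConjDisj base (f i)) → CloConjDisj base (.disj f)

/-- `IsEA α true φ` says `φ ∈ 𝔈_α` and `IsEA α false φ` says `φ ∈ 𝔄_α`:
`𝔈₁ = Σ₁`, `𝔄₁ = Π₁`; for `α > 1`, `𝔈_α` is the closure of `⋃_{1 ≤ β < α} 𝔄̄_β` under `∃`
and countable disjunction, where `𝔄̄_β` is the closure of `𝔄_β` under countable
conjunctions and disjunctions; dually for `𝔄_α`. -/
def IsEA {L : FirstOrder.Language.{0,0}} (α : Ordinal.{0}) (isE : Bool) (φ : LForm L) : Prop :=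
  if α ≤ 1 then (if isE then IsSP 1 true φ else IsSP 1 false φ)
  else if isE then
    CloExDisj (fun ψ => ∃ β, 1 ≤ β ∧ ∃ _ : β < α,
      CloConjDisj (fun χ => IsEA β false χ) ψ) φ
  else
    CloAllConj (fun ψ => ∃ β, 1 ≤ β ∧ ∃ _ : β < α,
      CloConjDisj (fun χ => IsEA β true χ) ψ) φ
termination_by α
decreasing_by all_goals assumption

/-- `φ ∈ 𝔈_α`. -/
def IsE {L : FirstOrder.Language.{0,0}} (α : Ordinal.{0}) (φ : LForm L) : Prop := IsEA α true φ

/-- `φ ∈ 𝔄_α`. -/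
def IsA {L : FirstOrder.Language.{0,0}} (α : Ordinal.{0}) (φ : LForm L) : Prop := IsEA α false φ

/-- `φ ∈ 𝔈̄_α`, the closure of `𝔈_α` under countable conjunctions and disjunctions. -/
def IsEbar {L : FirstOrder.Language.{0,0}} (α : Ordinal.{0}) (φ : LForm L) : Prop :=
  CloConjDisj (IsE α) φ

/-- `φ ∈ 𝔄̄_α`, the closure of `𝔄_α` under countable conjunctions and disjunctions. -/
def IsAbar {L : FirstOrder.Language.{0,0}} (α : Ordinal.{0}) (φ : LForm L) : Prop :=
  CloConjDisj (IsA α) φ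

/-- `φ` is a `∀𝔈_α` formula: a countable conjunction of universally quantified `𝔈_α`
formulas. -/
def IsForallE {L : FirstOrder.Language.{0,0}} (α : Ordinal.{0}) (φ : LForm L) : Prop :=
  ∃ f : ℕ → LForm L, φ = .conj f ∧ ∀ i, ∃ ψ, AllBlockOf (f i) ψ ∧ IsE α ψ

/-- A sentence is a formula with no free variables. -/
def IsSentence {L : FirstOrder.Language.{0,0}} (φ : LForm L) : Prop := fv φ = ∅

/-- Satisfaction of a formula (with free variables among `x_0, …, x_{n-1}`) by a tuple. -/
def SatTup {L : FirstOrder.Language.{0,0}} (M : Type) [L.Structure M] {n : ℕ}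
    (c : Fin n → M) (φ : LForm L) : Prop :=
  ∀ v : ℕ → M, (∀ k : Fin n, v k = c k) → Sat M φ v

end

/-!
For a fixed countable `M` and tuples `a`, `b`, the set of `N ∈ Mod(L)` with
`(M, a) ≤_α (N, b)`, and the set with `(N, b) ≤_α (M, a)`, is clopen for `α = 0`; for `α > 0`
it is a countable intersection, over `β < α` and tuples `d`, of countable unions, over tuples
`c`, of sets of level `β` of the other kind. Each such step costs two levels of the Borel
hierarchy, so by induction these sets are `𝚷⁰_{2α+1}`. As `2β + 2 < λ` for `β < λ`, the sets
of level `λ` are `𝚷⁰_λ`, and so those of level `λ + 1` are `𝚷⁰_{λ+2}`.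

At a limit `λ`, `≤_λ` is the conjunction of the `≤_β` for `β < λ`, and taking the empty tuple,
`(A, a) ≤_{β+1} (B, b)` implies `(B, b) ≤_β (A, a)`; hence `≤_λ` is symmetric.
-/

open Set

section Borel

variable {X : Type} [TopologicalSpace X]

theorem sigmaB_of_isClopen {A : Set X} (h : IsClopen A) (γ : Ordinal.{0}) : SigmaB γ A := by
  rcases le_or_gt γ 1 with hγ | hγ
  · rw [SigmaB, if_pos hγ]
    exact h.isOpen
  · rw [SigmaB, if_neg hγ.not_ge]
    refine ⟨fun _ => A, (iUnion_const A).symm, fun _ => ⟨1, le_rfl, hγ, ?_⟩⟩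
    rw [SigmaB, if_pos le_rfl]
    exact h.compl.isOpen

theorem piB_of_isClopen {A : Set X} (h : IsClopen A) (γ : Ordinal.{0}) : PiB γ A :=
  sigmaB_of_isClopen h.compl γ

theorem sigmaB_iUnion {ι : Type*} [Countable ι] {γ : Ordinal.{0}} (hγ : 1 < γ) {f : ι → Set X}
    (hf : ∀ i, ∃ β, 1 ≤ β ∧ β < γ ∧ PiB β (f i)) : SigmaB γ (⋃ i, f i) := by
  rcases isEmpty_or_nonempty ι with _ | _
  · rw [iUnion_of_empty]
    exact sigmaB_of_isClopen isClopen_empty γ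
  obtain ⟨g, hg⟩ := exists_surjective_nat ι
  rw [SigmaB, if_neg hγ.not_ge]
  refine ⟨f ∘ g, (hg.iUnion_comp f).symm, fun k => ?_⟩
  obtain ⟨β, hβ₁, hβγ, hP⟩ := hf (g k)
  exact ⟨β, hβ₁, hβγ, hP⟩

theorem piB_iInter_iUnion {ι : Type*} {κ : ι → Type*} [Countable ι] [∀ i, Countable (κ i)]
    {γ : Ordinal.{0}} (hγ : 1 < γ) {f : ∀ i, κ i → Set X}
    (hf : ∀ i, ∃ δ, 1 ≤ δ ∧ δ + 1 < γ ∧ ∀ j, PiB δ (f i j)) : PiB γ (⋂ i, ⋃ j, f i j) := by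
  rw [PiB, compl_iInter]
  refine sigmaB_iUnion hγ fun i => ?_
  obtain ⟨δ, hδ₁, hδγ, hP⟩ := hf i
  have hδ : δ < δ + 1 := lt_add_one δ
  refine ⟨δ + 1, hδ₁.trans hδ.le, hδγ, ?_⟩
  rw [PiB, _root_.compl_compl]
  exact sigmaB_iUnion (hδ₁.trans_lt hδ) fun j => ⟨δ, hδ₁, hδ, hP j⟩

end Borel

section Clopen

variable {L : FirstOrder.Language.{0,0}} [L.IsRelational]

theorem Term.exists_eq_var {α : Type} (t : L.Term α) : ∃ i, t = Term.var i := by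
  cases t with
  | var i => exact ⟨i, rfl⟩
  | func f _ => exact isEmptyElim f

theorem isClopen_setOf_realize_of_isQF {n l : ℕ} {φ : L.BoundedFormula (Fin n) l} (hφ : φ.IsQF)
    (b : Fin n → ℕ) (xs : Fin l → ℕ) :
    IsClopen {x : ModSpace L | φ.Realize (M := ModCarrier x) b xs} := by
  have isClopen_const (p : Prop) : IsClopen {_x : ModSpace L | p} := by
    by_cases hp : p <;> simp [hp, isClopen_univ, isClopen_empty]
  induction hφ with
  | falsum => exact isClopen_const False
  | of_isAtomic ha =>
    cases ha with
    | equal t₁ t₂ =>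
      obtain ⟨i, rfl⟩ := Term.exists_eq_var t₁
      obtain ⟨j, rfl⟩ := Term.exists_eq_var t₂
      exact isClopen_const (Sum.elim b xs i = Sum.elim b xs j)
    | rel R ts =>
      choose j hj using fun i => Term.exists_eq_var (ts i)
      obtain rfl : ts = fun i => Term.var (j i) := funext hj
      exact (isClopen_discrete {true}).preimage
        (f := fun x : ModSpace L => x _ R fun i => Sum.elim b xs (j i)) (by fun_prop)
  | imp _ _ ih₁ ih₂ =>
    convert ih₁.compl.union ih₂ using 1
    ext x
    exact imp_iff_not_or

end Clopen

section BackAndForth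

variable {L : FirstOrder.Language.{0,0}} [L.IsRelational] [∀ n, Countable (L.Relations n)]
  {A B : Type} [L.Structure A] [L.Structure B]

theorem bfLeq_zero {n : ℕ} (a : Fin n → A) (b : Fin n → B) :
    bfLeq L 0 A B a b ↔ ∀ k < n, ((qfEnum L n k).Realize a ↔ (qfEnum L n k).Realize b) := by
  rw [bfLeq, if_pos rfl]

theorem bfLeq_of_ne_zero {α : Ordinal.{0}} (hα : α ≠ 0) {n : ℕ} (a : Fin n → A)
    (b : Fin n → B) :
    bfLeq L α A B a b ↔ ∀ β < α, ∀ (m : ℕ) (d : Fin m → B), ∃ c : Fin m → A,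
      bfLeq L β B A (Fin.append b d) (Fin.append a c) := by
  rw [bfLeq, if_neg hα]

theorem bfLeq_symm_of_isSuccLimit {μ : Ordinal.{0}} (hμ : Order.IsSuccLimit μ) {n : ℕ}
    {a : Fin n → A} {b : Fin n → B} (h : bfLeq L μ A B a b) : bfLeq L μ B A b a := by
  rw [bfLeq_of_ne_zero hμ.ne_bot] at h ⊢
  intro β hβ
  obtain ⟨c, hc⟩ := h (β + 1) (hμ.succ_lt hβ) 0 Fin.elim0
  obtain rfl : c = Fin.elim0 := Subsingleton.elim _ _
  simp only [Fin.append_elim0] at hc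
  exact (bfLeq_of_ne_zero (Order.succ_ne_bot β) b a).1 hc β (lt_add_one _)

end BackAndForth

theorem Ordinal.countable_Iio {α : Ordinal.{0}} (h : α.card ≤ Cardinal.aleph0) :
    (Iio α).Countable := by
  rw [← countable_coe_iff, ← Cardinal.mk_le_aleph0_iff, Cardinal.mk_Iio_ordinal,
    Cardinal.lift_le_aleph0]
  exact h

section BackAndForthSets

variable (L : FirstOrder.Language.{0,0}) [L.IsRelational] [∀ n, Countable (L.Relations n)]
  (M : Type) [L.Structure M]

theorem qfEnum_isQF (n k : ℕ) : (qfEnum L n k).IsQF :=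
  haveI : Nonempty {φ : L.Formula (Fin n) // φ.IsQF} := ⟨⟨⊥, BoundedFormula.isQF_bot⟩⟩
  (Classical.choose (exists_surjective_nat {φ : L.Formula (Fin n) // φ.IsQF}) k).2

def bfAbove (α : Ordinal.{0}) {n : ℕ} (a : Fin n → M) (b : Fin n → ℕ) : Set (ModSpace L) :=
  {x | bfLeq L α M (ModCarrier x) a b}

def bfBelow (α : Ordinal.{0}) {n : ℕ} (a : Fin n → M) (b : Fin n → ℕ) : Set (ModSpace L) :=
  {x | bfLeq L α (ModCarrier x) M b a}

variable {L M}

theorem isClopen_setOf_forall_qfEnum_iff {n : ℕ} (a : Fin n → M) (b : Fin n → ℕ) :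
    IsClopen {x : ModSpace L |
      ∀ k < n, ((qfEnum L n k).Realize (M := ModCarrier x) b ↔ (qfEnum L n k).Realize a)} := by
  have hiff (k : ℕ) : IsClopen {x : ModSpace L |
      (qfEnum L n k).Realize (M := ModCarrier x) b ↔ (qfEnum L n k).Realize a} := by
    have h : IsClopen {x : ModSpace L | (qfEnum L n k).Realize (M := ModCarrier x) b} := by
      convert isClopen_setOf_realize_of_isQF (qfEnum_isQF L n k) b Fin.elim0 using 3 with x
      exact iff_of_eq (congrArg (BoundedFormula.Realize (M := ModCarrier x) (qfEnum L n k) b)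
        (Subsingleton.elim _ _))
    by_cases ha : (qfEnum L n k).Realize a
    · simpa [ha] using h
    · simpa [ha, compl_ofPred] using h.compl
  simpa only [ofPred_forall, mem_Iio] using (finite_Iio n).isClopen_biInter fun k _ => hiff k

theorem isClopen_bfAbove_zero {n : ℕ} (a : Fin n → M) (b : Fin n → ℕ) :
    IsClopen (bfAbove L M 0 a b) := by
  convert isClopen_setOf_forall_qfEnum_iff (L := L) a b using 1
  ext x
  exact (bfLeq_zero (B := ModCarrier x) a b).trans (forall₂_congr fun _ _ => Iff.comm)

theorem isClopen_bfBelow_zero {n : ℕ} (a : Fin n → M) (b : Fin n → ℕ) :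
    IsClopen (bfBelow L M 0 a b) := by
  convert isClopen_setOf_forall_qfEnum_iff (L := L) a b using 1
  ext x
  exact bfLeq_zero (A := ModCarrier x) b a

theorem bfAbove_eq_iInter_iUnion {α : Ordinal.{0}} (hα : α ≠ 0) {n : ℕ} (a : Fin n → M)
    (b : Fin n → ℕ) :
    bfAbove L M α a b = ⋂ p : Iio α × Σ m, Fin m → ℕ,
      ⋃ c : Fin p.2.1 → M, bfBelow L M p.1 (Fin.append a c) (Fin.append b p.2.2) := by
  ext x
  simp only [bfAbove, bfBelow, mem_ofPred_eq, mem_iInter, mem_iUnion, Prod.forall,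
    Sigma.forall, Subtype.forall, mem_Iio]
  exact bfLeq_of_ne_zero hα _ _

theorem bfBelow_eq_iInter_iUnion {α : Ordinal.{0}} (hα : α ≠ 0) {n : ℕ} (a : Fin n → M)
    (b : Fin n → ℕ) :
    bfBelow L M α a b = ⋂ p : Iio α × Σ m, Fin m → M,
      ⋃ c : Fin p.2.1 → ℕ, bfAbove L M p.1 (Fin.append a p.2.2) (Fin.append b c) := by
  ext x
  simp only [bfAbove, bfBelow, mem_ofPred_eq, mem_iInter, mem_iUnion, Prod.forall,
    Sigma.forall, Subtype.forall, mem_Iio]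
  exact bfLeq_of_ne_zero hα _ _

end BackAndForthSets

theorem two_mul_add_two_lt_of_isSuccLimit {β μ : Ordinal.{0}} (hμ : Order.IsSuccLimit μ)
    (hβ : β < μ) : 2 * β + 1 + 1 < μ := by
  have hμ₂ : 2 * μ = μ :=
    Ordinal.mul_omega0_dvd two_pos (Ordinal.natCast_lt_omega0 2)
      (Ordinal.isSuccPrelimit_iff_omega0_dvd.1 hμ.isSuccPrelimit)
  have : 2 * β < μ := hμ₂ ▸ mul_lt_mul_of_pos_left hβ two_pos
  exact hμ.succ_lt (hμ.succ_lt this)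

section Complexity

variable {L : FirstOrder.Language.{0,0}} [L.IsRelational] [∀ n, Countable (L.Relations n)]
  {M : Type} [L.Structure M] [Countable M]

theorem piB_bfAbove_bfBelow_of_forall_lt {α γ : Ordinal.{0}} (hα : α ≠ 0)
    (hαc : α.card ≤ Cardinal.aleph0)
    (H : ∀ β < α, ∃ δ, 1 ≤ δ ∧ δ + 1 < γ ∧ ∀ (n : ℕ) (a : Fin n → M) (b : Fin n → ℕ),
      PiB δ (bfAbove L M β a b) ∧ PiB δ (bfBelow L M β a b))
    {n : ℕ} (a : Fin n → M) (b : Fin n → ℕ) :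
    PiB γ (bfAbove L M α a b) ∧ PiB γ (bfBelow L M α a b) := by
  have := (Ordinal.countable_Iio hαc).to_subtype
  have hγ : 1 < γ := by
    obtain ⟨δ, hδ₁, hδγ, -⟩ := H 0 (pos_iff_ne_zero.2 hα)
    exact hδ₁.trans_lt ((lt_add_one _).trans hδγ)
  constructor
  · rw [bfAbove_eq_iInter_iUnion hα]
    refine piB_iInter_iUnion hγ fun ⟨⟨β, hβ⟩, _, _⟩ => ?_
    obtain ⟨δ, hδ₁, hδγ, hP⟩ := H β hβ
    exact ⟨δ, hδ₁, hδγ, fun _ => (hP _ _ _).2⟩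
  · rw [bfBelow_eq_iInter_iUnion hα]
    refine piB_iInter_iUnion hγ fun ⟨⟨β, hβ⟩, _, _⟩ => ?_
    obtain ⟨δ, hδ₁, hδγ, hP⟩ := H β hβ
    exact ⟨δ, hδ₁, hδγ, fun _ => (hP _ _ _).1⟩

theorem piB_bfAbove_bfBelow (α : Ordinal.{0}) (hαc : α.card ≤ Cardinal.aleph0) {n : ℕ}
    (a : Fin n → M) (b : Fin n → ℕ) :
    PiB (2 * α + 1) (bfAbove L M α a b) ∧ PiB (2 * α + 1) (bfBelow L M α a b) := by
  induction α using WellFoundedLT.induction generalizing n with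
  | _ α IH =>
    rcases eq_or_ne α 0 with rfl | hα
    · exact ⟨piB_of_isClopen (isClopen_bfAbove_zero a b) _,
        piB_of_isClopen (isClopen_bfBelow_zero a b) _⟩
    refine piB_bfAbove_bfBelow_of_forall_lt hα hαc (fun β hβ => ⟨2 * β + 1, le_add_self, ?_,
      fun _ => IH β hβ ((Ordinal.card_le_card hβ.le).trans hαc)⟩) a b
    calc 2 * β + 1 + 1 = 2 * (β + 1) := by rw [mul_add_one, add_assoc, one_add_one_eq_two]
      _ ≤ 2 * α := mul_le_mul_right (Order.add_one_le_iff.2 hβ) 2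
      _ < 2 * α + 1 := lt_add_one _

theorem piB_bfAbove_bfBelow_of_isSuccLimit {μ : Ordinal.{0}} (hμ : Order.IsSuccLimit μ)
    (hμc : μ.card ≤ Cardinal.aleph0) {n : ℕ} (a : Fin n → M) (b : Fin n → ℕ) :
    PiB μ (bfAbove L M μ a b) ∧ PiB μ (bfBelow L M μ a b) :=
  piB_bfAbove_bfBelow_of_forall_lt hμ.ne_bot hμc (fun β hβ =>
    ⟨2 * β + 1, le_add_self, two_mul_add_two_lt_of_isSuccLimit hμ hβ,
      fun _ => piB_bfAbove_bfBelow β ((Ordinal.card_le_card hβ.le).trans hμc)⟩) a b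

theorem piB_bfAbove_bfBelow_add_one_of_isSuccLimit {μ : Ordinal.{0}} (hμ : Order.IsSuccLimit μ)
    (hμc : μ.card ≤ Cardinal.aleph0) {n : ℕ} (a : Fin n → M) (b : Fin n → ℕ) :
    PiB (μ + 1 + 1) (bfAbove L M (μ + 1) a b) ∧ PiB (μ + 1 + 1) (bfBelow L M (μ + 1) a b) := by
  have hμc' : (μ + 1).card ≤ Cardinal.aleph0 := by
    rw [Ordinal.card_add, Ordinal.card_one]
    exact Cardinal.add_le_aleph0.2 ⟨hμc, Cardinal.one_le_aleph0⟩
  refine piB_bfAbove_bfBelow_of_forall_lt (Order.succ_ne_bot μ) hμc' (fun β hβ => ?_) a b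
  rcases (Order.lt_add_one_iff.1 hβ).lt_or_eq with hβ | rfl
  · refine ⟨2 * β + 1, le_add_self, ?_,
      fun _ => piB_bfAbove_bfBelow β ((Ordinal.card_le_card hβ.le).trans hμc)⟩
    exact (two_mul_add_two_lt_of_isSuccLimit hμ hβ).trans
      ((lt_add_one μ).trans (lt_add_one (μ + 1)))
  · exact ⟨β, (Ordinal.one_lt_of_isSuccLimit hμ).le, lt_add_one _,
      fun _ => piB_bfAbove_bfBelow_of_isSuccLimit hμ hμc⟩

end Complexity

/-- For any countable structure `M` and countable limit ordinal `λ`: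
(1) `{N : N ≤_λ M} = {N : N ≥_λ M}` and this set is `𝚷⁰_λ`; (2) for `α = λ+1`,
`{N : N ≥_α M}` is `𝚷⁰_{α+1}`; (3) for `α = λ+1`, `{N : N ≤_α M}` is `𝚷⁰_{α+1}`. -/
theorem statement4 (L : FirstOrder.Language.{0,0}) [L.IsRelational]
    [∀ n, Countable (L.Relations n)]
    (M : Type) [L.Structure M] [Countable M]
    (lam : Ordinal.{0}) (hlam : Order.IsSuccLimit lam) (hc : lam.card ≤ Cardinal.aleph0) :
    ({x : ModSpace L | structLeq L lam (ModCarrier x) M}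
        = {x : ModSpace L | structLeq L lam M (ModCarrier x)} ∧
      PiB lam {x : ModSpace L | structLeq L lam (ModCarrier x) M}) ∧
    PiB (lam + 1 + 1) {x : ModSpace L | structLeq L (lam + 1) M (ModCarrier x)} ∧
    PiB (lam + 1 + 1) {x : ModSpace L | structLeq L (lam + 1) (ModCarrier x) M} := by
  have hsucc := piB_bfAbove_bfBelow_add_one_of_isSuccLimit (L := L) (M := M) hlam hc
    Fin.elim0 Fin.elim0
  refine ⟨⟨?_, (piB_bfAbove_bfBelow_of_isSuccLimit hlam hc Fin.elim0 Fin.elim0).2⟩,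
    hsucc.1, hsucc.2⟩
  ext x
  exact ⟨bfLeq_symm_of_isSuccLimit hlam, bfLeq_symm_of_isSuccLimit hlam⟩

end BFPaper
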